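/- arXiv:math/0606766 — 8 statements merged into one kernel-verified Lean document; each statement's English description precedes it below -/
import Mathlib

section
/- Let n be even with n ≥ 14 and r ∈ (ℤ/nℤ)* with r² ≠ ±1. If two of the four elements r, -r, r⁻¹, -r⁻¹ both satisfy the equation 1 + x + x² + x³ = 0 or its sign-variant equations from rows 22–29 simultaneously producing three solutions, then r³ = 1 or r³ = -1. -/
set_option linter.unreachableTactic false
set_option linter.unusedTactic false
set_option maxHeartbeats 2000000


lemma two_ne (n : ℕ) (hn : 14 ≤ n) : (2 : ZMod n) ≠ 0 := by
  intro hc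
  have h2 : ((2 : ℕ) : ZMod n) = 0 := by exact_mod_cast hc
  have hd := (ZMod.natCast_eq_zero_iff 2 n).mp h2
  have := Nat.le_of_dvd (by norm_num) hd
  omega

lemma tk (n : ℕ) (hn : 14 ≤ n) (r : ZMod n) (hr : IsUnit r) (k : ℕ)
    (h : 2 * r ^ k = 0) : False := by
  obtain ⟨s, hs⟩ := hr.exists_right_inv
  apply two_ne n hn
  have h2 : (2 : ZMod n) = (2 * r ^ k) * s ^ k := by
    rw [mul_assoc, ← mul_pow, hs, one_pow, mul_one]
  rw [h2, h, zero_mul]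

lemma key (n m : ℕ) (hn : 14 ≤ n) (hm : n = m + m) (r : ZMod n)
    (h1 : r ^ 2 ≠ 1)
    (hA : 2 * r = 2 ∨ 2 * r = -2)
    (hE : ∃ a b c : ZMod n, (a = 1 ∨ a = -1) ∧ (b = 1 ∨ b = -1) ∧ (c = 1 ∨ c = -1) ∧
      1 + a * r + b * r ^ 2 + c * r ^ 3 = 0) : False := by
  have hnz : NeZero n := ⟨by omega⟩
  -- 2 * m = 0 in ZMod n
  have h2h : (2 : ZMod n) * (m : ZMod n) = 0 := by
    have hself : ((m + m : ℕ) : ZMod n) = 0 := by rw [← hm]; exact ZMod.natCast_self n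
    push_cast at hself
    linear_combination hself
  -- torsion lemma
  have T : ∀ x : ZMod n, 2 * x = 0 → x = 0 ∨ x = (m : ZMod n) := by
    intro x hx
    have hvx : ((x.val : ℕ) : ZMod n) = x := ZMod.natCast_rightInverse x
    have hx2 : ((2 * x.val : ℕ) : ZMod n) = 0 := by
      push_cast [hvx]
      linear_combination hx
    have hd := (ZMod.natCast_eq_zero_iff _ n).mp hx2
    have hlt : x.val < n := ZMod.val_lt x
    obtain ⟨k, hk⟩ := hd
    have hk1 : k < 2 := by
      by_contra hc
      push_neg at hc
      have : n * 2 ≤ n * k := Nat.mul_le_mul_left n hc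
      omega
    have : x.val = 0 ∨ x.val = m := by
      interval_cases k <;> omega
    rcases this with h' | h'
    · left; rw [← hvx, h']; simp
    · right; rw [← hvx, h']
  have hh0 : (m : ZMod n) ≠ 0 := by
    intro hc
    have hd := (ZMod.natCast_eq_zero_iff m n).mp hc
    have := Nat.le_of_dvd (by omega) hd
    omega
  have hhm2 : (m : ZMod n) ≠ -2 := by
    intro hc
    have h2 : ((m + 2 : ℕ) : ZMod n) = 0 := by push_cast; linear_combination hc
    have hd := (ZMod.natCast_eq_zero_iff (m + 2) n).mp h2
    have := Nat.le_of_dvd (by omega) hd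
    omega
  have hhm4 : (m : ZMod n) ≠ -4 := by
    intro hc
    have h2 : ((m + 4 : ℕ) : ZMod n) = 0 := by push_cast; linear_combination hc
    have hd := (ZMod.natCast_eq_zero_iff (m + 4) n).mp h2
    have := Nat.le_of_dvd (by omega) hd
    omega
  obtain ⟨a, b, c, ha, hb, hc, hEq⟩ := hE
  -- r = ±1 + m
  have hr1 : r = 1 + (m : ZMod n) ∨ r = -1 + (m : ZMod n) := by
    rcases hA with hA | hA
    · rcases T (r - 1) (by linear_combination hA) with h' | h'
      · exact absurd (show r ^ 2 = 1 by linear_combination (r + 1) * h') h1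
      · left; linear_combination h'
    · rcases T (r + 1) (by linear_combination hA) with h' | h'
      · exact absurd (show r ^ 2 = 1 by linear_combination (r - 1) * h') h1
      · right; linear_combination h'
  have hsq : (m : ZMod n) * m = 0 ∨ (m : ZMod n) * m = m :=
    T ((m : ZMod n) * m) (by linear_combination (m : ZMod n) * h2h)
  have hr2' : r ^ 2 = 1 + (m : ZMod n) * m := by
    rcases hr1 with h' | h'
    · linear_combination (r + 1 + (m : ZMod n)) * h' + h2h
    · linear_combination (r - 1 + (m : ZMod n)) * h' - h2h
  have hsq' : (m : ZMod n) * m = m := by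
    rcases hsq with h' | h'
    · exact absurd (show r ^ 2 = 1 by linear_combination hr2' + h') h1
    · exact h'
  have hr2'' : r ^ 2 = 1 + (m : ZMod n) := by linear_combination hr2' + hsq'
  rcases hr1 with h'' | h''
  · have hr3'' : r ^ 3 = 1 + (m : ZMod n) := by
      linear_combination r * hr2'' + (1 + (m : ZMod n)) * h'' + h2h + hsq'
    rw [hr3'', hr2'', h''] at hEq
    rcases ha with ha | ha <;> rcases hb with hb | hb <;> rcases hc with hc | hc <;>
        subst ha <;> subst hb <;> subst hc <;>
      first
      | exact hh0 (by linear_combination hEq - h2h)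
      | exact hh0 (by linear_combination hEq)
      | exact hh0 (by linear_combination hEq + h2h)
      | exact hh0 (by linear_combination hEq + 2 * h2h)
      | exact hh0 (by linear_combination -hEq - h2h)
      | exact hh0 (by linear_combination -hEq)
      | exact hh0 (by linear_combination -hEq + h2h)
      | exact hh0 (by linear_combination -hEq + 2 * h2h)
      | exact hhm2 (by linear_combination hEq - h2h)
      | exact hhm2 (by linear_combination hEq)
      | exact hhm2 (by linear_combination hEq + h2h)
      | exact hhm2 (by linear_combination hEq + 2 * h2h)
      | exact hhm2 (by linear_combination -hEq - h2h)
      | exact hhm2 (by linear_combination -hEq)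
      | exact hhm2 (by linear_combination -hEq + h2h)
      | exact hhm2 (by linear_combination -hEq + 2 * h2h)
      | exact hhm4 (by linear_combination hEq - h2h)
      | exact hhm4 (by linear_combination hEq)
      | exact hhm4 (by linear_combination hEq + h2h)
      | exact hhm4 (by linear_combination hEq + 2 * h2h)
      | exact hhm4 (by linear_combination -hEq - h2h)
      | exact hhm4 (by linear_combination -hEq)
      | exact hhm4 (by linear_combination -hEq + h2h)
      | exact hhm4 (by linear_combination -hEq + 2 * h2h)
  · have hr3'' : r ^ 3 = -1 - (m : ZMod n) := by
      linear_combination r * hr2'' + (1 + (m : ZMod n)) * h'' + h2h + hsq'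
    rw [hr3'', hr2'', h''] at hEq
    rcases ha with ha | ha <;> rcases hb with hb | hb <;> rcases hc with hc | hc <;>
        subst ha <;> subst hb <;> subst hc <;>
      first
      | exact hh0 (by linear_combination hEq - h2h)
      | exact hh0 (by linear_combination hEq)
      | exact hh0 (by linear_combination hEq + h2h)
      | exact hh0 (by linear_combination hEq + 2 * h2h)
      | exact hh0 (by linear_combination -hEq - h2h)
      | exact hh0 (by linear_combination -hEq)
      | exact hh0 (by linear_combination -hEq + h2h)
      | exact hh0 (by linear_combination -hEq + 2 * h2h)
      | exact hhm2 (by linear_combination hEq - h2h)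
      | exact hhm2 (by linear_combination hEq)
      | exact hhm2 (by linear_combination hEq + h2h)
      | exact hhm2 (by linear_combination hEq + 2 * h2h)
      | exact hhm2 (by linear_combination -hEq - h2h)
      | exact hhm2 (by linear_combination -hEq)
      | exact hhm2 (by linear_combination -hEq + h2h)
      | exact hhm2 (by linear_combination -hEq + 2 * h2h)
      | exact hhm4 (by linear_combination hEq - h2h)
      | exact hhm4 (by linear_combination hEq)
      | exact hhm4 (by linear_combination hEq + h2h)
      | exact hhm4 (by linear_combination hEq + 2 * h2h)
      | exact hhm4 (by linear_combination -hEq - h2h)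
      | exact hhm4 (by linear_combination -hEq)
      | exact hhm4 (by linear_combination -hEq + h2h)
      | exact hhm4 (by linear_combination -hEq + 2 * h2h)


theorem stmt5 (n : ℕ) (hne : Even n) (hn : 14 ≤ n) (r : ZMod n) (hr : IsUnit r)
    (h1 : r ^ 2 ≠ 1) (h2 : r ^ 2 ≠ -1)
    (h3 : 3 ≤ ((([1 + r + r ^ 2 + r ^ 3, 1 + r + r ^ 2 - r ^ 3,
        1 + r - r ^ 2 + r ^ 3, 1 + r - r ^ 2 - r ^ 3,
        1 - r + r ^ 2 + r ^ 3, 1 - r + r ^ 2 - r ^ 3,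
        1 - r - r ^ 2 + r ^ 3, 1 - r - r ^ 2 - r ^ 3] : List (ZMod n)).filter
        (fun x => x = 0)).length)) :
    r ^ 3 = 1 ∨ r ^ 3 = -1 := by
  obtain ⟨m, hm⟩ := hne
  by_cases c1 : (1 + r + r ^ 2 + r ^ 3 : ZMod n) = 0 <;>
  by_cases c2 : (1 + r + r ^ 2 - r ^ 3 : ZMod n) = 0 <;>
  by_cases c3 : (1 + r - r ^ 2 + r ^ 3 : ZMod n) = 0 <;>
  by_cases c4 : (1 + r - r ^ 2 - r ^ 3 : ZMod n) = 0 <;>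
  by_cases c5 : (1 - r + r ^ 2 + r ^ 3 : ZMod n) = 0 <;>
  by_cases c6 : (1 - r + r ^ 2 - r ^ 3 : ZMod n) = 0 <;>
  by_cases c7 : (1 - r - r ^ 2 + r ^ 3 : ZMod n) = 0 <;>
  by_cases c8 : (1 - r - r ^ 2 - r ^ 3 : ZMod n) = 0 <;>
  first
  | (simp [c1, c2, c3, c4, c5, c6, c7, c8] at h3 <;> done)
  | exact absurd (show (2 : ZMod n) = 0 by linear_combination c1 + c8) (two_ne n hn)
  | exact absurd (show (2 : ZMod n) = 0 by linear_combination c2 + c7) (two_ne n hn)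
  | exact absurd (show (2 : ZMod n) = 0 by linear_combination c3 + c6) (two_ne n hn)
  | exact absurd (show (2 : ZMod n) = 0 by linear_combination c4 + c5) (two_ne n hn)
  | exact (tk n hn r hr 3 (by linear_combination c1 - c2)).elim
  | exact (tk n hn r hr 3 (by linear_combination c3 - c4)).elim
  | exact (tk n hn r hr 3 (by linear_combination c5 - c6)).elim
  | exact (tk n hn r hr 3 (by linear_combination c7 - c8)).elim
  | exact (tk n hn r hr 2 (by linear_combination c1 - c3)).elim
  | exact (tk n hn r hr 2 (by linear_combination c2 - c4)).elim
  | exact (tk n hn r hr 2 (by linear_combination c5 - c7)).elim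
  | exact (tk n hn r hr 2 (by linear_combination c6 - c8)).elim
  | exact (tk n hn r hr 1 (by linear_combination c1 - c5)).elim
  | exact (tk n hn r hr 1 (by linear_combination c2 - c6)).elim
  | exact (tk n hn r hr 1 (by linear_combination c3 - c7)).elim
  | exact (tk n hn r hr 1 (by linear_combination c4 - c8)).elim
  | exact (key n m hn hm r h1
      (by first
        | exact Or.inr (by linear_combination c1 + c4)
        | exact Or.inr (by linear_combination c2 + c3)
        | exact Or.inl (by linear_combination -c5 - c8)
        | exact Or.inl (by linear_combination -c6 - c7))
      (by first
        | exact ⟨1, 1, 1, Or.inl rfl, Or.inl rfl, Or.inl rfl, by linear_combination c1⟩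
        | exact ⟨1, 1, -1, Or.inl rfl, Or.inl rfl, Or.inr rfl, by linear_combination c2⟩
        | exact ⟨1, -1, 1, Or.inl rfl, Or.inr rfl, Or.inl rfl, by linear_combination c3⟩
        | exact ⟨1, -1, -1, Or.inl rfl, Or.inr rfl, Or.inr rfl, by linear_combination c4⟩
        | exact ⟨-1, 1, 1, Or.inr rfl, Or.inl rfl, Or.inl rfl, by linear_combination c5⟩
        | exact ⟨-1, 1, -1, Or.inr rfl, Or.inl rfl, Or.inr rfl, by linear_combination c6⟩
        | exact ⟨-1, -1, 1, Or.inr rfl, Or.inr rfl, Or.inl rfl, by linear_combination c7⟩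
        | exact ⟨-1, -1, -1, Or.inr rfl, Or.inr rfl, Or.inr rfl, by linear_combination c8⟩)).elim
end

section
/- Let n be even, n ≥ 14, and r ∈ (ℤ/nℤ)* satisfy 2 - r - r² = 0 and 1 + r + 2r² = 0. Then r = 5 in ℤ/nℤ and 28 ≡ 0 (mod n), so n = 14 or n = 28. -/
theorem stmt8 (n : ℕ) (hne : Even n) (hn : 14 ≤ n) (r : ZMod n) (hr : IsUnit r)
    (e1 : 2 - r - r ^ 2 = 0) (e2 : 1 + r + 2 * r ^ 2 = 0) :
    r = 5 ∧ (28 : ZMod n) = 0 ∧ (n = 14 ∨ n = 28) := by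
  have hr5 : r = 5 := by linear_combination -2*e1 - e2
  have h28 : (28 : ZMod n) = 0 := by
    subst hr5; linear_combination -e1
  have hdvd : n ∣ 28 := by
    have : ((28 : ℕ) : ZMod n) = 0 := by exact_mod_cast h28
    exact (ZMod.natCast_eq_zero_iff 28 n).mp this
  refine ⟨hr5, h28, ?_⟩
  have hle := Nat.le_of_dvd (by norm_num) hdvd
  interval_cases n <;> omega
end

section
/- Let n be even, n ≥ 14, and r ∈ (ℤ/nℤ)* satisfy 2 - r - r² = 0 and 1 - r + 2r² = 0. Then 2r - 18 = 0 and n = 22, so r = 9. -/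
theorem stmt9 (n : ℕ) (hne : Even n) (hn : 14 ≤ n) (r : ZMod n) (hr : IsUnit r)
    (h1 : r ^ 2 ≠ 1) (h2 : r ^ 2 ≠ -1)
    (e1 : 2 - r - r ^ 2 = 0) (e2 : 1 - r + 2 * r ^ 2 = 0) :
    2 * r - 18 = 0 ∧ n = 22 ∧ r = 9 := by
  have h5 : (3 : ZMod n) * r = 5 := by linear_combination (-2) * e1 - e2
  have h22 : ((22 : ℕ) : ZMod n) = 0 := by
    push_cast
    linear_combination (-9 : ZMod n) * e1 - (3 * r + 8) * h5
  have hdvd : n ∣ 22 := (ZMod.natCast_eq_zero_iff 22 n).mp h22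
  have hle : n ≤ 22 := Nat.le_of_dvd (by norm_num) hdvd
  have hn22 : n = 22 := by
    interval_cases n <;> first | rfl | (exfalso; revert hdvd; decide)
  subst hn22
  have hz : (22 : ZMod 22) = 0 := by decide
  have hr9 : r = 9 := by linear_combination (15 : ZMod 22) * h5 + (3 - 2 * r) * hz
  exact ⟨by rw [hr9]; decide, rfl, hr9⟩
end

section
/- Let n ≥ 14 be even, r ∈ (ℤ/nℤ)* with r⁸ = 1 and r² ≠ ±1, and t ∈ ℤ/nℤ with t(r-1) = 0 and 1 + r + ⋯ + r⁷ + 2t = 0. If 1 + r² + t = 0, then r⁴ = 1, t = n/2, and n ≡ 0 (mod 4). -/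
theorem stmt11 (n : ℕ) (hn : 14 ≤ n) (hne : Even n) (r t : ZMod n) (hr : IsUnit r)
    (h8 : r ^ 8 = 1) (h1 : r ^ 2 ≠ 1) (h2 : r ^ 2 ≠ -1)
    (ht : t * (r - 1) = 0)
    (hsum : 1 + r + r ^ 2 + r ^ 3 + r ^ 4 + r ^ 5 + r ^ 6 + r ^ 7 + 2 * t = 0)
    (hc : 1 + r ^ 2 + t = 0) :
    r ^ 4 = 1 ∧ t = ((n / 2 : ℕ) : ZMod n) ∧ n % 4 = 0 := by
  haveI : NeZero n := ⟨by omega⟩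
  -- r^4 = 1
  have hr4 : r ^ 4 = 1 := by
    linear_combination (-(r+1))*ht + (r^2-1)*hc
  -- 2*(1+r^2)*r^4 = 0
  have key : 2*(1+r^2)*r^4 = 0 := by
    linear_combination hsum + (r^4+1)*ht + (r^4 - r^5 - r - 1)*hc
  have h2s : 2*(1+r^2) = 0 := by
    rw [hr4, mul_one] at key; exact key
  have h2t : 2*t = 0 := by linear_combination 2*hc - h2s
  have htne : t ≠ 0 := by
    intro h0
    apply h2
    rw [h0, add_zero] at hc
    linear_combination hc
  -- t = n/2
  have hvne : t.val ≠ 0 := fun h => htne (by rwa [ZMod.val_eq_zero] at h)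
  have hvlt : t.val < n := ZMod.val_lt t
  have hdvd : n ∣ 2 * t.val := by
    have : ((2 * t.val : ℕ) : ZMod n) = 0 := by
      push_cast [ZMod.natCast_val, ZMod.cast_id]
      linear_combination h2t
    exact (ZMod.natCast_eq_zero_iff _ _).mp this
  have hval : t.val = n / 2 := by
    obtain ⟨k, hk⟩ := hdvd
    have hk1 : k = 1 := by
      rcases Nat.lt_or_ge k 2 with h | h
      · interval_cases k <;> omega
      · exfalso
        have : n * 2 ≤ n * k := Nat.mul_le_mul_left n h
        omega
    rw [hk1, mul_one] at hk
    omega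
  have ht2 : t = ((n / 2 : ℕ) : ZMod n) := by
    rw [← hval]
    simp [ZMod.natCast_val, ZMod.cast_id]
  -- n % 4 = 0
  have h2n : 2 ∣ n := hne.two_dvd
  have f := ZMod.castHom h2n (ZMod 2)
  have hfr : (ZMod.castHom h2n (ZMod 2)) r = 1 := by
    have hu : IsUnit ((ZMod.castHom h2n (ZMod 2)) r) := hr.map _
    have hall : ∀ y : ZMod 2, IsUnit y → y = 1 := by decide
    exact hall _ hu
  have hft : (ZMod.castHom h2n (ZMod 2)) t = 0 := by
    have := congrArg (ZMod.castHom h2n (ZMod 2)) hc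
    simp only [map_add, map_one, map_pow, map_zero, hfr] at this
    have h2z : (2 : ZMod 2) = 0 := by decide
    linear_combination this - h2z
  have h24 : (2 : ℕ) ∣ n / 2 := by
    rw [ht2, map_natCast] at hft
    exact (ZMod.natCast_eq_zero_iff _ _).mp hft
  exact ⟨hr4, ht2, by omega⟩
end

section
/- Let n ≥ 14 be even, r ∈ (ℤ/nℤ)* with r⁸ = 1, r² ≠ ±1, and t ∈ ℤ/nℤ with t(r-1) = 0 and 1 + r + ⋯ + r⁷ + 2t = 0. Then the conditions 1 + r + r² + r³ + t = 0 and 1 + r⁴ + t = 0 cannot both hold. -/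
lemma aux_sq (n : ℕ) (hn : 14 ≤ n) (x : ZMod n) (hx : 2 * x = 0) :
    x * x = 0 ∨ x * x = x := by
  haveI : NeZero n := ⟨by omega⟩
  have hxval : ((x.val : ℕ) : ZMod n) = x := ZMod.natCast_val x |>.trans (ZMod.cast_id n x)
  have h0 : ((2 * x.val : ℕ) : ZMod n) = 0 := by push_cast; rw [hxval]; linear_combination hx
  have hdvd : n ∣ 2 * x.val := (ZMod.natCast_eq_zero_iff _ _).mp h0
  have hlt : x.val < n := ZMod.val_lt x
  rcases hdvd with ⟨c, hc⟩
  have hc2 : c < 2 := by nlinarith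
  interval_cases c
  · left
    have : x.val = 0 := by omega
    rw [← hxval, this]; simp
  · set k := x.val with hk
    rcases Nat.even_or_odd k with he | ho
    · left
      have hd : n ∣ k * k := by
        rcases he with ⟨m, hm⟩
        have hnk : n = 2 * k := by omega
        exact ⟨m, by rw [hnk, hm]; ring⟩
      rw [← hxval, ← Nat.cast_mul]
      exact (ZMod.natCast_eq_zero_iff _ _).mpr hd
    · right
      have hd : n ∣ k * k - k := by
        rcases ho with ⟨m, hm⟩
        have hnk : n = 2 * k := by omega
        exact ⟨m, by rw [hnk, hm]; exact Nat.sub_eq_of_eq_add (by ring)⟩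
      have hle : k ≤ k * k := Nat.le_mul_of_pos_left k (by omega)
      have hz := (ZMod.natCast_eq_zero_iff (k * k - k) n).mpr hd
      rw [Nat.cast_sub hle, Nat.cast_mul] at hz
      rw [← hxval]
      linear_combination hz

theorem stmt13 (n : ℕ) (hn : 14 ≤ n) (hne : Even n) (r t : ZMod n) (hr : IsUnit r)
    (h8 : r ^ 8 = 1) (h1 : r ^ 2 ≠ 1) (h2 : r ^ 2 ≠ -1)
    (ht : t * (r - 1) = 0)
    (hsum : 1 + r + r ^ 2 + r ^ 3 + r ^ 4 + r ^ 5 + r ^ 6 + r ^ 7 + 2 * t = 0) :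
    ¬(1 + r + r ^ 2 + r ^ 3 + t = 0 ∧ 1 + r ^ 4 + t = 0) := by
  rintro ⟨ha, hb⟩
  have hr4 : r ^ 4 = 1 := by linear_combination (r - 1) * ha - ht
  have htv : t = -2 := by linear_combination hb - hr4
  have h2r : 2 * (r - 1) = 0 := by linear_combination -ht + (r - 1) * htv
  rcases aux_sq n hn (r - 1) h2r with h | h
  · exact h1 (by linear_combination h + h2r)
  · -- r^2 = r, r unit ⇒ r = 1
    have hrr : r * r = r * 1 := by linear_combination h + h2r
    have : r = 1 := hr.mul_left_cancel hrr
    exact h1 (by rw [this]; ring)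
end

section
/- Let n be even, n ≥ 14, and r ∈ (ℤ/nℤ)* satisfy r⁶ = 1, r² ≠ ±1, and 2 + r - r² = 0. Then 14 + 14r = 0 and n = 14; but then r ∈ {3,-3,5,-5}, forcing 3 ± r = 0 or 1 ± 3r = 0; hence if additionally none of 3+r, 3-r, 1+3r, 1-3r is 0, then 1 + 2r - r² ≠ 0. -/
theorem stmt14 (n : ℕ) (hne : Even n) (hn : 14 ≤ n) (r : ZMod n) (hr : IsUnit r)
    (h6 : r ^ 6 = 1) (h1 : r ^ 2 ≠ 1) (h2 : r ^ 2 ≠ -1)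
    (e : 1 + 2 * r - r ^ 2 = 0) :
    14 + 14 * r = 0 ∧ n = 14 ∧
      (3 + r = 0 ∨ 3 - r = 0 ∨ 1 + 3 * r = 0 ∨ 1 - 3 * r = 0) := by
  have hr3 : IsUnit (r ^ 3) := hr.pow 3
  have key : (14 : ZMod n) * r ^ 3 = 0 := by
    linear_combination (r^4 + 2*r^3 + 5*r^2 - 2*r + 1) * e + h6
  have h14 : (14 : ZMod n) = 0 := (hr3.mul_left_eq_zero).mp key
  have hdvd : n ∣ 14 := by
    haveI : NeZero n := ⟨by omega⟩
    have h14' : ((14 : ℕ) : ZMod n) = 0 := by exact_mod_cast h14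
    exact (ZMod.natCast_eq_zero_iff 14 n).mp h14'
  have hn14 : n = 14 := Nat.le_antisymm (Nat.le_of_dvd (by norm_num) hdvd) hn
  subst hn14
  clear hr h6 h1 h2 hr3 key h14 hdvd hne hn
  revert e
  revert r
  decide
end

section
/- Let n be even, r ∈ (ℤ/nℤ)* with r⁴ = 1 and r² ≠ ±1, and t ∈ ℤ/nℤ with t(r-1) = 0, 1 + r + r² + r³ + 2t = 0, and 3 + r + t = 0. Then n = 20 and either (r,t) = (7,10) or (r,t) = (17,0). -/
set_option synthInstance.maxSize 4000 in
set_option maxHeartbeats 1000000 in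
theorem stmt17 (n : ℕ) (hne : Even n) (r t : ZMod n) (hr : IsUnit r)
    (h4 : r ^ 4 = 1) (h1 : r ^ 2 ≠ 1) (h2 : r ^ 2 ≠ -1)
    (ht : t * (r - 1) = 0) (hsum : 1 + r + r ^ 2 + r ^ 3 + 2 * t = 0)
    (hc : 3 + r + t = 0) :
    n = 20 ∧ ((r = 7 ∧ t = 10) ∨ (r = 17 ∧ t = 0)) := by
  have e1 : (3 + r) * (r - 1) = 0 := by linear_combination (r - 1) * hc - ht
  have e3 : 4 * r = 8 := by linear_combination hsum - 2 * hc - (r - 1) * e1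
  have e5 : 20 * r = 20 := by linear_combination (r ^ 2 - 2 * r + 7) * e1 - h4
  have e6 : ((20 : ℕ) : ZMod n) = 0 := by push_cast; linear_combination e5 - 5 * e3
  rcases Nat.eq_zero_or_pos n with hn0 | hn0
  · subst hn0
    norm_num at e6
  haveI : NeZero n := ⟨hn0.ne'⟩
  have hdvd : n ∣ 20 := (ZMod.natCast_eq_zero_iff 20 n).mp e6
  have hle : n ≤ 20 := Nat.le_of_dvd (by norm_num) hdvd
  clear hr e1 e3 e5 e6 hn0
  rw [Nat.even_iff] at hne
  interval_cases n <;> first | omega | (revert r t; decide)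
end

section
/- Let n be even, r ∈ (ℤ/nℤ)* with r⁴ = 1 and r² ≠ ±1, and t ∈ ℤ/nℤ with t(r-1) = 0, 1 + r + r² + r³ + 2t = 0, and 3 + r + r² + t = 0. Then n = 30 and either (r,t) = (13,25) or (r,t) = (23,15). -/
set_option maxHeartbeats 2000000
set_option maxRecDepth 10000


theorem stmt18 (n : ℕ) (hne : Even n) (r t : ZMod n) (hr : IsUnit r)
    (h4 : r ^ 4 = 1) (h1 : r ^ 2 ≠ 1) (h2 : r ^ 2 ≠ -1)
    (ht : t * (r - 1) = 0) (hsum : 1 + r + r ^ 2 + r ^ 3 + 2 * t = 0)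
    (hc : 3 + r + r ^ 2 + t = 0) :
    n = 30 ∧ ((r = 13 ∧ t = 25) ∨ (r = 23 ∧ t = 15)) := by
  have h30 : (30 : ZMod n) = 0 := by
    linear_combination (3*r^2+2*r+11)*(r-1)*hc - (3*r^2+2*r+11)*ht
      + (6*r-11)*hsum - 2*(6*r-11)*hc - (8+3*r)*h4
  rcases Nat.eq_zero_or_pos n with h0 | hpos
  · subst h0
    exact absurd h30 (by norm_num)
  have hdvd : n ∣ 30 := by
    haveI : NeZero n := ⟨by omega⟩
    have : ((30 : ℕ) : ZMod n) = 0 := by exact_mod_cast h30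
    exact (ZMod.natCast_eq_zero_iff 30 n).mp this
  have hle : n ≤ 30 := Nat.le_of_dvd (by norm_num) hdvd
  have htval : t = -(3 + r + r ^ 2) := by linear_combination hc
  subst htval
  clear hr hsum hc
  have hcases : n = 2 ∨ n = 6 ∨ n = 10 ∨ n = 30 := by
    interval_cases n <;> revert hdvd <;> revert hne <;> decide
  rcases hcases with hn | hn | hn | hn <;> subst hn
  · exfalso; revert h4 h1 h2 ht; revert r; decide
  · exfalso; revert h4 h1 h2 ht; revert r; decide
  · exfalso; revert h4 h1 h2 ht; revert r; decide
  · refine ⟨rfl, ?_⟩; revert h4 h1 h2 ht; revert r; decide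
end
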